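/- The topological space (X, τ) is separable and metrizable. -/

import Mathlib

open Set Topology

/-- `d` is a metric on the group `G` which is right-invariant, bounded by `1`,
and compatible with the topology of `G` (the `d`-balls around each point form a
neighbourhood basis). -/
def IsRightInvariantCompatibleMetric {G : Type*} [Group G] [TopologicalSpace G]
    (d : G → G → ℝ) : Prop :=
  (∀ g h, d g h = d h g) ∧
  (∀ g h, d g h = 0 ↔ g = h) ∧
  (∀ g h k, d g k ≤ d g h + d h k) ∧
  (∀ g h k, d (g * k) (h * k) = d g h) ∧
  (∀ g h, d g h ≤ 1) ∧
  (∀ x : G, (nhds x).HasBasis (fun ε : ℝ => 0 < ε) (fun ε => {y | d x y < ε}))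

/-- `L(G,d)`: the set of functions `f : G → [0,1]` with
`|f g₁ - f g₂| ≤ d g₁ g₂` for all `g₁ g₂`. -/
def LGd {G : Type*} (d : G → G → ℝ) : Set (G → ℝ) :=
  {f | (∀ g, f g ∈ Icc (0 : ℝ) 1) ∧ ∀ g₁ g₂, |f g₁ - f g₂| ≤ d g₁ g₂}

/-- The sequence `s q₀ q₁ q₂ 0 m n`. -/
def seqT (s : List ℚ) (q₀ q₁ q₂ : ℚ) (m n : ℕ) : List ℚ :=
  s ++ [q₀, q₁, q₂, 0, (m : ℚ), (n : ℚ)]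

/-- The sequence `s q₀ q₁ q₂ 1 m n`. -/
def seqU (s : List ℚ) (q₀ q₁ q₂ : ℚ) (m n : ℕ) : List ℚ :=
  s ++ [q₀, q₁, q₂, 1, (m : ℚ), (n : ℚ)]

/-- Condition (1), with `g₀` ranging over the set `S`:
for `t = s q₀ q₁ q₂ 0 m n`, `f_t(g₀) < q₁ - ε` or `f_s(g₀) ≤ q₀ + ε`. -/
def Cond1 {G : Type*} (f : List ℚ → G → ℝ) (S : Set G) : Prop :=
  ∀ (s : List ℚ), ∀ g₀ ∈ S, ∀ (m n : ℕ) (q₀ q₁ q₂ ε : ℚ),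
    q₀ ∈ Ioo (0 : ℚ) 1 → q₁ ∈ Ioo (0 : ℚ) 1 → q₂ ∈ Ioo (0 : ℚ) 1 → ε ∈ Ioo (0 : ℚ) 1 →
    0 < q₀ - ε → q₀ + ε < 1 → 0 < q₁ - ε → q₁ + ε < 1 → 0 < q₂ - ε → q₂ + ε < 1 →
    (f (seqT s q₀ q₁ q₂ m n) g₀ < (q₁ : ℝ) - (ε : ℝ) ∨ f s g₀ ≤ (q₀ : ℝ) + (ε : ℝ))

/-- Condition (2), with `g₀` ranging over the set `S`:
for `t = s q₀ q₁ q₂ 0 m n` and `u = s q₀ q₁ q₂ 1 m n`,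
`f_u(g₀) ≥ q₂ + ε` or `f_t(g₀) ≥ q₁ - ε`. -/
def Cond2 {G : Type*} (f : List ℚ → G → ℝ) (S : Set G) : Prop :=
  ∀ (s : List ℚ), ∀ g₀ ∈ S, ∀ (m n : ℕ) (q₀ q₁ q₂ ε : ℚ),
    q₀ ∈ Ioo (0 : ℚ) 1 → q₁ ∈ Ioo (0 : ℚ) 1 → q₂ ∈ Ioo (0 : ℚ) 1 → ε ∈ Ioo (0 : ℚ) 1 →
    0 < q₀ - ε → q₀ + ε < 1 → 0 < q₁ - ε → q₁ + ε < 1 → 0 < q₂ - ε → q₂ + ε < 1 →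
    ((q₂ : ℝ) + (ε : ℝ) ≤ f (seqU s q₀ q₁ q₂ m n) g₀ ∨
      (q₁ : ℝ) - (ε : ℝ) ≤ f (seqT s q₀ q₁ q₂ m n) g₀)

/-- Condition (3), with `g₀` ranging over the set `S` and the witness `g₁`
ranging over the set `T`: if `f_s(g₀) < q₀` then there are `0 < q₂ < q₁ < q₀`,
`g₁ ∈ T` with `d(g₀,g₁) < ε`, and `m, n` such that `f_u(g₁) < q₂` for
`u = s q₀ q₁ q₂ 1 m n`. -/
def Cond3 {G : Type*} (d : G → G → ℝ) (f : List ℚ → G → ℝ) (S T : Set G) : Prop :=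
  ∀ (s : List ℚ), ∀ g₀ ∈ S, ∀ q₀ ∈ Ioo (0 : ℚ) 1, ∀ ε ∈ Ioo (0 : ℚ) 1,
    f s g₀ < (q₀ : ℝ) →
    ∃ (q₁ q₂ : ℚ) (g₁ : G) (m n : ℕ),
      g₁ ∈ T ∧ 0 < q₂ ∧ q₂ < q₁ ∧ q₁ < q₀ ∧ d g₀ g₁ < (ε : ℝ) ∧
      f (seqU s q₀ q₁ q₂ m n) g₁ < (q₂ : ℝ)

/-- Hjorth's set `X ⊆ L(G,d)^{ℚ^{<ℕ}}`: the elements `f⃗` all of whose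
coordinates lie in `L(G,d)` and which satisfy conditions (1), (2), (3) with
respect to the countable dense subgroup `G₀`. -/
def HjorthX {G : Type*} [Group G] (d : G → G → ℝ) (G₀ : Subgroup G) :
    Set (List ℚ → G → ℝ) :=
  {f | (∀ s, f s ∈ LGd d) ∧ Cond1 f (G₀ : Set G) ∧ Cond2 f (G₀ : Set G) ∧
    Cond3 d f (G₀ : Set G) (G₀ : Set G)}

/-- The topology `τ` on `X`, generated by the subbasic sets
`{f⃗ ∈ X : f_s(g₀) < q₀}` for `s ∈ ℚ^{<ℕ}`, `g₀ ∈ G₀`, `q₀ ∈ ℚ`. -/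
def hjorthTau {G : Type*} [Group G] (d : G → G → ℝ) (G₀ : Subgroup G) :
    TopologicalSpace ↥(HjorthX d G₀) :=
  TopologicalSpace.generateFrom
    {U | ∃ (s : List ℚ) (g₀ : G) (q₀ : ℚ), g₀ ∈ G₀ ∧
      U = {f : ↥(HjorthX d G₀) | f.1 s g₀ < (q₀ : ℝ)}}

/-!
The subbasis of `τ` is indexed by `ℚ^{<ℕ} × G₀ × ℚ`, so `τ` is second countable. It is `T₀`
because the coordinates of a point of `X` are `d`-Lipschitz, hence continuous, hence determined
by their values on the dense subgroup `G₀`, where `τ` sees them. For regularity, given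
`f_s(g₀) < q`, condition (3) provides `g₁` close to `g₀` and a coordinate `u` with
`f_u(g₁) < q₂`; on the closure of the open set `{h : h_u(g₁) < q₂}` conditions (1) and (2)
keep `h_s(g₁)`, and hence `h_s(g₀)`, below `q`. Urysohn's metrization theorem concludes.
-/

open TopologicalSpace

theorem LGd.apply_le_add {G : Type*} {d : G → G → ℝ} {f : G → ℝ} (hf : f ∈ LGd d) (x y : G) :
    f x ≤ f y + d x y := by
  linarith [(abs_le.1 (hf.2 x y)).2]

theorem LGd.continuous {G : Type*} [TopologicalSpace G] {d : G → G → ℝ}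
    (hd : ∀ x : G, (𝓝 x).HasBasis (fun ε : ℝ => 0 < ε) (fun ε => {y | d x y < ε}))
    {f : G → ℝ} (hf : f ∈ LGd d) : Continuous f :=
  continuous_iff_continuousAt.2 fun x =>
    ((hd x).tendsto_iff Metric.nhds_basis_ball).2 fun ε hε =>
      ⟨ε, hε, fun y hy => by
        rw [mem_ofPred_eq] at hy
        rw [Metric.mem_ball, Real.dist_eq, abs_sub_comm]
        exact (hf.2 x y).trans_lt hy⟩

theorem Cond1.lt_or_le {G : Type*} {f : List ℚ → G → ℝ} {S : Set G} (h : Cond1 f S)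
    (s : List ℚ) {g : G} (hg : g ∈ S) (m n : ℕ) {q₀ q₁ q₂ ε : ℚ} (hε : 0 < ε) (hεq₂ : ε < q₂)
    (hq₂ : q₂ < q₁) (hq₁ : q₁ < q₀) (hq₀ : q₀ + ε < 1) :
    f (seqT s q₀ q₁ q₂ m n) g < q₁ - ε ∨ f s g ≤ q₀ + ε := by
  refine h s g hg m n q₀ q₁ q₂ ε ?_ ?_ ?_ ?_ ?_ ?_ ?_ ?_ ?_ ?_ <;>
    first | exact ⟨by linarith, by linarith⟩ | linarith

theorem Cond2.le_or_le {G : Type*} {f : List ℚ → G → ℝ} {S : Set G} (h : Cond2 f S)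
    (s : List ℚ) {g : G} (hg : g ∈ S) (m n : ℕ) {q₀ q₁ q₂ ε : ℚ} (hε : 0 < ε) (hεq₂ : ε < q₂)
    (hq₂ : q₂ < q₁) (hq₁ : q₁ < q₀) (hq₀ : q₀ + ε < 1) :
    q₂ + ε ≤ f (seqU s q₀ q₁ q₂ m n) g ∨ q₁ - ε ≤ f (seqT s q₀ q₁ q₂ m n) g := by
  refine h s g hg m n q₀ q₁ q₂ ε ?_ ?_ ?_ ?_ ?_ ?_ ?_ ?_ ?_ ?_ <;>
    first | exact ⟨by linarith, by linarith⟩ | linarith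

namespace HjorthX

variable {G : Type*} [Group G] {d : G → G → ℝ} {G₀ : Subgroup G}

instance : TopologicalSpace (HjorthX d G₀) :=
  hjorthTau d G₀

theorem isOpen_setOf_apply_lt (s : List ℚ) {g : G} (hg : g ∈ G₀) (q : ℚ) :
    IsOpen {f : HjorthX d G₀ | f.1 s g < q} :=
  isOpen_generateFrom_of_mem ⟨s, g, q, hg, rfl⟩

theorem closure_setOf_seqU_lt_subset (s : List ℚ) {g : G} (hg : g ∈ G₀) (m n : ℕ)
    {q₀ q₁ q₂ ε : ℚ} (hε : 0 < ε) (hεq₂ : ε < q₂) (hq₂ : q₂ < q₁) (hq₁ : q₁ < q₀)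
    (hq₀ : q₀ + ε < 1) :
    closure {f : HjorthX d G₀ | f.1 (seqU s q₀ q₁ q₂ m n) g < q₂} ⊆
      {f | f.1 s g ≤ q₀ + ε} := by
  intro f hf
  by_contra hfs
  -- By (1), near `f` the `t`-coordinate is small; by (2) the `u`-coordinate is then large.
  have hft : f.1 (seqT s q₀ q₁ q₂ m n) g < ((q₁ - ε : ℚ) : ℝ) := by
    push_cast
    exact (f.2.2.1.lt_or_le s hg m n hε hεq₂ hq₂ hq₁ hq₀).resolve_right hfs
  obtain ⟨f', hf't, hf'u⟩ := mem_closure_iff.1 hf _ (isOpen_setOf_apply_lt _ hg _) hft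
  rw [mem_ofPred_eq] at hf't hf'u
  push_cast at hf't
  have hεR : (0 : ℝ) < ε := by exact_mod_cast hε
  rcases f'.2.2.2.1.le_or_le s hg m n hε hεq₂ hq₂ hq₁ hq₀ with hu | ht <;> linarith

theorem exists_mem_nhds_closure_subset_setOf_apply_lt (f : HjorthX d G₀) (s : List ℚ)
    {g₀ : G} (hg₀ : g₀ ∈ G₀) {q : ℚ} (hf : f.1 s g₀ < q) :
    ∃ N ∈ 𝓝 f, closure N ⊆ {h : HjorthX d G₀ | h.1 s g₀ < q} := by
  by_cases hq : (1 : ℝ) < q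
  · exact ⟨univ, Filter.univ_mem, fun h _ => ((h.2.1 s).1 g₀).2.trans_lt hq⟩
  obtain ⟨q₀, hfq₀, hq₀q⟩ := exists_rat_btwn hf
  have hq₀ : 0 < q₀ := by exact_mod_cast ((f.2.1 s).1 g₀).1.trans_lt hfq₀
  replace hq₀q : q₀ < q := by exact_mod_cast hq₀q
  have hq1 : q ≤ 1 := by exact_mod_cast not_lt.1 hq
  obtain ⟨q₁, q₂, g₁, m, n, hg₁, hq₂, hq₂q₁, hq₁q₀, hdist, hfu⟩ :=
    f.2.2.2.2 s g₀ hg₀ q₀ ⟨hq₀, by linarith⟩ ((q - q₀) / 2) ⟨by linarith, by linarith⟩ hfq₀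
  set ε := min (q₂ / 2) (min ((1 - q₀) / 2) ((q - q₀) / 2))
  have hε₁ : ε ≤ (1 - q₀) / 2 := (min_le_right _ _).trans (min_le_left _ _)
  have hε₂ : ε ≤ (q - q₀) / 2 := (min_le_right _ _).trans (min_le_right _ _)
  have hε : 0 < ε := lt_min (by linarith) (lt_min (by linarith) (by linarith))
  have hεq₂ : ε < q₂ := (min_le_left _ _).trans_lt (by linarith)
  have hsum : ((q₀ + ε + (q - q₀) / 2 : ℚ) : ℝ) ≤ q := by exact_mod_cast (by linarith : _ ≤ q)
  push_cast at hsum hdist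
  refine ⟨_, (isOpen_setOf_apply_lt _ hg₁ _).mem_nhds hfu, fun h hh => ?_⟩
  have hhs := closure_setOf_seqU_lt_subset s hg₁ m n hε hεq₂ hq₂q₁ hq₁q₀ (by linarith) hh
  rw [mem_ofPred_eq] at hhs ⊢
  linarith [LGd.apply_le_add (h.2.1 s) g₀ g₁]

instance regularSpace : RegularSpace (HjorthX d G₀) := by
  refine (regularSpace_generateFrom rfl).2 ?_
  rintro _ ⟨s, g₀, q, hg₀, rfl⟩ f hf
  obtain ⟨N, hN, hNq⟩ := exists_mem_nhds_closure_subset_setOf_apply_lt f s hg₀ hf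
  exact Filter.disjoint_of_disjoint_of_mem disjoint_compl_left
    (isClosed_closure.isOpen_compl.mem_nhdsSet.2 (compl_subset_compl.2 hNq))
    (Filter.mem_of_superset hN subset_closure)

theorem secondCountableTopology (hG₀ : (G₀ : Set G).Countable) :
    SecondCountableTopology (HjorthX d G₀) := by
  have : Countable G₀ := hG₀.to_subtype
  refine SecondCountableTopology.mk' ((countable_range fun p : List ℚ × G₀ × ℚ =>
    {f : HjorthX d G₀ | f.1 p.1 p.2.1 < p.2.2}).mono ?_)
  rintro _ ⟨s, g, q, hg, rfl⟩
  exact ⟨(s, ⟨g, hg⟩, q), rfl⟩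

theorem apply_le_of_inseparable {f h : HjorthX d G₀} (hfh : Inseparable f h) (s : List ℚ)
    {g : G} (hg : g ∈ G₀) : f.1 s g ≤ h.1 s g :=
  le_of_forall_lt_rat_imp_le fun q hq =>
    ((hfh.mem_open_iff (isOpen_setOf_apply_lt s hg q)).2 hq).le

theorem t0Space [TopologicalSpace G]
    (hd : ∀ x : G, (𝓝 x).HasBasis (fun ε : ℝ => 0 < ε) (fun ε => {y | d x y < ε}))
    (hG₀ : Dense (G₀ : Set G)) : T0Space (HjorthX d G₀) :=
  (t0Space_iff_inseparable _).2 fun f h hfh => Subtype.ext <| funext fun s =>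
    (LGd.continuous hd (f.2.1 s)).ext_on hG₀ (LGd.continuous hd (h.2.1 s)) fun _ hg =>
      le_antisymm (apply_le_of_inseparable hfh s hg) (apply_le_of_inseparable hfh.symm s hg)

end HjorthX

theorem hjorthTau_separable_metrizable_general {G : Type*} [Group G] [TopologicalSpace G]
    (d : G → G → ℝ) (hd : IsRightInvariantCompatibleMetric d)
    (G₀ : Subgroup G) (hG₀count : (G₀ : Set G).Countable) (hG₀dense : Dense (G₀ : Set G)) :
    @TopologicalSpace.SeparableSpace ↥(HjorthX d G₀) (hjorthTau d G₀) ∧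
    @TopologicalSpace.MetrizableSpace ↥(HjorthX d G₀) (hjorthTau d G₀) := by
  have := HjorthX.secondCountableTopology (d := d) hG₀count
  have := HjorthX.t0Space hd.2.2.2.2.2 hG₀dense
  exact ⟨inferInstance, inferInstance⟩

/-- The topological space `(X, τ)` is separable and metrizable. -/
theorem hjorthTau_separable_metrizable {G : Type*} [Group G] [TopologicalSpace G]
    [IsTopologicalGroup G] [PolishSpace G]
    (d : G → G → ℝ) (hd : IsRightInvariantCompatibleMetric d)
    (G₀ : Subgroup G) (hG₀count : (G₀ : Set G).Countable) (hG₀dense : Dense (G₀ : Set G)) :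
    @TopologicalSpace.SeparableSpace ↥(HjorthX d G₀) (hjorthTau d G₀) ∧
    @TopologicalSpace.MetrizableSpace ↥(HjorthX d G₀) (hjorthTau d G₀) :=
  hjorthTau_separable_metrizable_general d hd G₀ hG₀count hG₀dense
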